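/- arXiv:2601.14149 — 4 statements merged into one kernel-verified Lean document; each statement's English description precedes it below -/
import Mathlib

section
/- For the graph surface f(x,y) = (x,y,u(x,y)) and a point p = (x,y) where the tangent plane does not pass through the origin, the ratio K_f(p)/d_f(p)⁴ equals (V_x·V_y − V_xy²)/V⁴, where V_x, V_y, V_xy, V are as defined via the determinants with rows built from second derivatives, first derivatives, and position. -/
open Real Matrix

/-- first partial derivative in x -/
noncomputable def px (u : ℝ × ℝ → ℝ) (p : ℝ × ℝ) : ℝ := fderiv ℝ u p (1, 0)
/-- first partial derivative in y -/
noncomputable def py (u : ℝ × ℝ → ℝ) (p : ℝ × ℝ) : ℝ := fderiv ℝ u p (0, 1)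
/-- second partial derivative u_xx -/
noncomputable def pxx (u : ℝ × ℝ → ℝ) (p : ℝ × ℝ) : ℝ :=
  fderiv ℝ (fun q => fderiv ℝ u q (1, 0)) p (1, 0)
/-- second partial derivative u_xy -/
noncomputable def pxy (u : ℝ × ℝ → ℝ) (p : ℝ × ℝ) : ℝ :=
  fderiv ℝ (fun q => fderiv ℝ u q (1, 0)) p (0, 1)
/-- second partial derivative u_yy -/
noncomputable def pyy (u : ℝ × ℝ → ℝ) (p : ℝ × ℝ) : ℝ :=
  fderiv ℝ (fun q => fderiv ℝ u q (0, 1)) p (0, 1)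

/-- determinant of the 3×3 matrix with given rows -/
noncomputable def det3 (r1 r2 r3 : Fin 3 → ℝ) : ℝ := (Matrix.of ![r1, r2, r3]).det

noncomputable def Vx (u : ℝ × ℝ → ℝ) (p : ℝ × ℝ) : ℝ :=
  det3 ![0, 0, pxx u p] ![1, 0, px u p] ![0, 1, py u p]
noncomputable def Vy (u : ℝ × ℝ → ℝ) (p : ℝ × ℝ) : ℝ :=
  det3 ![0, 0, pyy u p] ![1, 0, px u p] ![0, 1, py u p]
noncomputable def Vxy (u : ℝ × ℝ → ℝ) (p : ℝ × ℝ) : ℝ :=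
  det3 ![0, 0, pxy u p] ![1, 0, px u p] ![0, 1, py u p]
noncomputable def Vol (u : ℝ × ℝ → ℝ) (p : ℝ × ℝ) : ℝ :=
  det3 ![p.1, p.2, u p] ![1, 0, px u p] ![0, 1, py u p]

noncomputable def Kf (u : ℝ × ℝ → ℝ) (p : ℝ × ℝ) : ℝ :=
  (pxx u p * pyy u p - (pxy u p) ^ 2) / ((px u p) ^ 2 + (py u p) ^ 2 + 1) ^ 2

noncomputable def df (u : ℝ × ℝ → ℝ) (p : ℝ × ℝ) : ℝ :=
  |p.1 * px u p + p.2 * py u p - u p| / Real.sqrt ((px u p) ^ 2 + (py u p) ^ 2 + 1)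

theorem stmt4 (u : ℝ × ℝ → ℝ) (hu : ContDiff ℝ (⊤ : ℕ∞) u) (p : ℝ × ℝ)
    (hV : Vol u p ≠ 0) :
    Kf u p / (df u p) ^ 4 = (Vx u p * Vy u p - (Vxy u p) ^ 2) / (Vol u p) ^ 4 := by
  have hVol : Vol u p = -(p.1 * px u p + p.2 * py u p - u p) := by
    simp [Vol, det3, Matrix.det_fin_three]; ring
  have hVx : Vx u p = pxx u p := by simp [Vx, det3, Matrix.det_fin_three]
  have hVy : Vy u p = pyy u p := by simp [Vy, det3, Matrix.det_fin_three]
  have hVxy : Vxy u p = pxy u p := by simp [Vxy, det3, Matrix.det_fin_three]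
  set a := p.1 * px u p + p.2 * py u p - u p with ha
  have ha0 : a ≠ 0 := by
    intro h; apply hV; rw [hVol, h, neg_zero]
  have hW : (0:ℝ) < (px u p) ^ 2 + (py u p) ^ 2 + 1 := by positivity
  have hdf : (df u p) ^ 4 = a ^ 4 / ((px u p) ^ 2 + (py u p) ^ 2 + 1) ^ 2 := by
    rw [df, div_pow, ← abs_pow]
    rw [abs_of_nonneg (by positivity : (0:ℝ) ≤ a ^ 4)]
    rw [show (4:ℕ) = 2 * 2 by rfl, pow_mul, pow_mul, Real.sq_sqrt hW.le]
  rw [Kf, hdf, hVol, hVx, hVy, hVxy]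
  rw [div_div_div_eq, neg_pow]
  field_simp
end

section
/- Ţiţeica's invariance theorem (volume form): if V ≠ 0 and det(A) ≠ 0, then (V̄_x·V̄_y − V̄_xy²)/V̄⁴ = (1/det(A)²) · (V_x·V_y − V_xy²)/V⁴. -/
open Real Matrix

/-- barred volumes for the centro-affine transform `f̄ = f ⬝ A` -/
noncomputable def bVx (u : ℝ × ℝ → ℝ) (p : ℝ × ℝ) (A : Matrix (Fin 3) (Fin 3) ℝ) : ℝ :=
  det3 (Matrix.vecMul ![0, 0, pxx u p] A) (Matrix.vecMul ![1, 0, px u p] A)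
    (Matrix.vecMul ![0, 1, py u p] A)
noncomputable def bVy (u : ℝ × ℝ → ℝ) (p : ℝ × ℝ) (A : Matrix (Fin 3) (Fin 3) ℝ) : ℝ :=
  det3 (Matrix.vecMul ![0, 0, pyy u p] A) (Matrix.vecMul ![1, 0, px u p] A)
    (Matrix.vecMul ![0, 1, py u p] A)
noncomputable def bVxy (u : ℝ × ℝ → ℝ) (p : ℝ × ℝ) (A : Matrix (Fin 3) (Fin 3) ℝ) : ℝ :=
  det3 (Matrix.vecMul ![0, 0, pxy u p] A) (Matrix.vecMul ![1, 0, px u p] A)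
    (Matrix.vecMul ![0, 1, py u p] A)
noncomputable def bVol (u : ℝ × ℝ → ℝ) (p : ℝ × ℝ) (A : Matrix (Fin 3) (Fin 3) ℝ) : ℝ :=
  det3 (Matrix.vecMul ![p.1, p.2, u p] A) (Matrix.vecMul ![1, 0, px u p] A)
    (Matrix.vecMul ![0, 1, py u p] A)

lemma det3_vecMul (r1 r2 r3 : Fin 3 → ℝ) (A : Matrix (Fin 3) (Fin 3) ℝ) :
    det3 (Matrix.vecMul r1 A) (Matrix.vecMul r2 A) (Matrix.vecMul r3 A) =
      det3 r1 r2 r3 * A.det := by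
  have h : Matrix.of ![Matrix.vecMul r1 A, Matrix.vecMul r2 A, Matrix.vecMul r3 A] =
      (Matrix.of ![r1, r2, r3]) * A := by
    ext i j
    fin_cases i <;> simp [Matrix.mul_apply, Matrix.vecMul, dotProduct]
  rw [det3, h, Matrix.det_mul, det3]

theorem stmt8 (u : ℝ × ℝ → ℝ) (hu : ContDiff ℝ (⊤ : ℕ∞) u) (p : ℝ × ℝ)
    (A : Matrix (Fin 3) (Fin 3) ℝ) (hV : Vol u p ≠ 0) (hA : A.det ≠ 0) :
    (bVx u p A * bVy u p A - (bVxy u p A) ^ 2) / (bVol u p A) ^ 4 =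
      (1 / A.det ^ 2) * ((Vx u p * Vy u p - (Vxy u p) ^ 2) / (Vol u p) ^ 4) := by
  rw [bVx, bVy, bVxy, bVol, det3_vecMul, det3_vecMul, det3_vecMul, det3_vecMul]
  rw [← Vx, ← Vy, ← Vxy, ← Vol]
  field_simp
end

section
/- If det(A)² = 1 and V ≠ 0, then the centro-affine transformation f̄ = f·A preserves the ratio exactly: (V̄_x·V̄_y − V̄_xy²)/V̄⁴ = (V_x·V_y − V_xy²)/V⁴. In particular, if the graph of u is a Ţiţeica surface with constant R, then so is its image under A with the same constant. -/
open Real Matrix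

theorem stmt9 (u : ℝ × ℝ → ℝ) (hu : ContDiff ℝ (⊤ : ℕ∞) u)
    (A : Matrix (Fin 3) (Fin 3) ℝ) (hA : A.det ^ 2 = 1)
    (hV : ∀ p : ℝ × ℝ, Vol u p ≠ 0) :
    (∀ p : ℝ × ℝ,
      (bVx u p A * bVy u p A - (bVxy u p A) ^ 2) / (bVol u p A) ^ 4 =
        (Vx u p * Vy u p - (Vxy u p) ^ 2) / (Vol u p) ^ 4) ∧
    (∀ R : ℝ, (∀ p : ℝ × ℝ, (Vx u p * Vy u p - (Vxy u p) ^ 2) / (Vol u p) ^ 4 = R) →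
      ∀ p : ℝ × ℝ,
        (bVx u p A * bVy u p A - (bVxy u p A) ^ 2) / (bVol u p A) ^ 4 = R) := by
  have key : ∀ p : ℝ × ℝ,
      (bVx u p A * bVy u p A - (bVxy u p A) ^ 2) / (bVol u p A) ^ 4 =
        (Vx u p * Vy u p - (Vxy u p) ^ 2) / (Vol u p) ^ 4 := by
    intro p
    have h1 : bVx u p A = Vx u p * A.det := det3_vecMul _ _ _ _
    have h2 : bVy u p A = Vy u p * A.det := det3_vecMul _ _ _ _
    have h3 : bVxy u p A = Vxy u p * A.det := det3_vecMul _ _ _ _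
    have h4 : bVol u p A = Vol u p * A.det := det3_vecMul _ _ _ _
    rw [h1, h2, h3, h4]
    have e1 : Vx u p * A.det * (Vy u p * A.det) - (Vxy u p * A.det) ^ 2 =
        (Vx u p * Vy u p - (Vxy u p) ^ 2) * A.det ^ 2 := by ring
    have e2 : (Vol u p * A.det) ^ 4 = (Vol u p) ^ 4 * (A.det ^ 2) ^ 2 := by ring
    rw [e1, e2, hA]
    ring
  exact ⟨key, fun R hR p => (key p).trans (hR p)⟩
end

section
/- Scaling behavior of the Ţiţeica constant: if u is smooth with V ≠ 0 everywhere on a domain and (V_x V_y − V_xy²)/V⁴ = R is constant on that domain, then for any 3×3 matrix A with det(A) ≠ 0, the transformed quantities satisfy (V̄_x V̄_y − V̄_xy²)/V̄⁴ = R/det(A)² on the same domain. -/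
open Real Matrix

theorem stmt19 (u : ℝ × ℝ → ℝ) (hu : ContDiff ℝ (⊤ : ℕ∞) u) (D : Set (ℝ × ℝ))
    (hV : ∀ p ∈ D, Vol u p ≠ 0) (R : ℝ)
    (hR : ∀ p ∈ D, (Vx u p * Vy u p - (Vxy u p) ^ 2) / (Vol u p) ^ 4 = R)
    (A : Matrix (Fin 3) (Fin 3) ℝ) (hA : A.det ≠ 0) :
    ∀ p ∈ D, (bVx u p A * bVy u p A - (bVxy u p A) ^ 2) / (bVol u p A) ^ 4 =
      R / A.det ^ 2 := by
  intro p hp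
  have hVx : bVx u p A = Vx u p * A.det := det3_vecMul _ _ _ _
  have hVy : bVy u p A = Vy u p * A.det := det3_vecMul _ _ _ _
  have hVxy : bVxy u p A = Vxy u p * A.det := det3_vecMul _ _ _ _
  have hVol : bVol u p A = Vol u p * A.det := det3_vecMul _ _ _ _
  have hR' := hR p hp
  have hV' := hV p hp
  rw [hVx, hVy, hVxy, hVol]
  field_simp at hR' ⊢
  linear_combination hR'
end
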